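/- Let S be an additively reduced semidomain and G a linearly ordered torsion-free abelian group. If f = ∑_{i=0}^∞ s_i x^{g_i} ∈ S⟦G⟧ with all s_i nonzero and there exists N such that the sequence of gaps (g_{N+i+1} − g_{N+i})_{i≥0} is strictly increasing and unbounded above in G, then f is monolithic. -/

import Mathlib

/-- Witness that `S` is a semidomain: an injective semiring hom into an integral domain. -/
structure SemidomainWitness (S : Type*) [CommSemiring S] where
  D : Type
  [commRing : CommRing D]
  [isDomain : IsDomain D]
  emb : S →+* D
  inj : Function.Injective emb

/-- `S` is a semidomain, i.e. (isomorphic to) a subsemiring of an integral domain. -/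
def IsSemidomain (S : Type*) [CommSemiring S] : Prop := Nonempty (SemidomainWitness S)

/-- `S` is additively reduced: `0` is the only additively invertible element. -/
def AddReduced (S : Type*) [AddZeroClass S] : Prop := ∀ a b : S, a + b = 0 → a = 0

/-- `s` is an atom of the additive monoid `(S, +)` (for `S` additively reduced):
it is nonzero and cannot be written as a sum of two nonzero elements. -/
def IsAddAtom {S : Type*} [AddZeroClass S] (s : S) : Prop :=
  s ≠ 0 ∧ ∀ a b : S, s = a + b → a = 0 ∨ b = 0

/-- `S` is additively Furstenberg: every nonzero element is divisible in `(S, +)`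
by an additive atom. -/
def AddFurstenberg (S : Type*) [AddZeroClass S] : Prop :=
  ∀ s : S, s ≠ 0 → ∃ a t : S, IsAddAtom a ∧ s = a + t


section Series
variable {S : Type*} [CommSemiring S] {G : Type*} [AddCommGroup G] [LinearOrder G] [IsOrderedAddMonoid G]

/-- `f` belongs to the group series semidomain `S⟦G⟧`: its support is contained in the range
of a strictly increasing sequence of exponents, so `f` is a formal sum `∑_{i=0}^∞ s_i x^{g_i}`. -/
def InSeries (f : HahnSeries G S) : Prop :=
  ∃ g : ℕ → G, StrictMono g ∧ f.support ⊆ Set.range g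

/-- A monomial `s·x^g` in `S⟦G⟧`. -/
def IsMonomialSeries (f : HahnSeries G S) : Prop :=
  ∃ (g : G) (s : S), f = HahnSeries.single g s

/-- `f` is monolithic in `S⟦G⟧`: every factorization of `f` within `S⟦G⟧` has a
monomial factor. -/
def MonolithicSeries (f : HahnSeries G S) : Prop :=
  f ≠ 0 ∧ ∀ p q : HahnSeries G S, InSeries p → InSeries q → f = p * q →
    IsMonomialSeries p ∨ IsMonomialSeries q

/-- `f` is a unit of the semidomain `S⟦G⟧`. -/
def IsUnitSeries (f : HahnSeries G S) : Prop :=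
  InSeries f ∧ ∃ h : HahnSeries G S, InSeries h ∧ f * h = 1

/-- `f` is irreducible in the multiplicative monoid of nonzero elements of `S⟦G⟧`. -/
def IrreducibleSeries (f : HahnSeries G S) : Prop :=
  InSeries f ∧ f ≠ 0 ∧ ¬ IsUnitSeries f ∧
    ∀ p q : HahnSeries G S, InSeries p → InSeries q → f = p * q →
      IsUnitSeries p ∨ IsUnitSeries q

end Series

/-!
Over an additively reduced semiring without zero divisors no cancellation can occur in a
product of series, so `supp (p * q) = supp p + supp q`. Suppose neither `p` nor `q` is a monomial
and pick `b₀ < b₁` in `supp q`. Since `supp f = range g` is infinite, one of the supports, say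
`supp p`, is infinite, so for infinitely many `a` both `a + b₀` and `a + b₁` are exponents of `f`,
at distance `b₁ - b₀`. This is impossible once the gaps of `g` exceed `b₁ - b₀`.
-/

open scoped Pointwise

lemma AddReduced.eq_zero_of_sum_eq_zero {S : Type*} [AddCommMonoid S] (hred : AddReduced S)
    {ι : Type*} {t : Finset ι} {F : ι → S} (h : ∑ i ∈ t, F i = 0) {i : ι} (hi : i ∈ t) :
    F i = 0 := by
  induction t using Finset.cons_induction with
  | empty => simp at hi
  | cons a t ha ih =>
    rw [Finset.sum_cons] at h
    rcases Finset.mem_cons.1 hi with rfl | hi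
    · exact hred _ _ h
    · exact ih (hred _ _ (by rwa [add_comm] at h)) hi

lemma IsSemidomain.noZeroDivisors {S : Type*} [CommSemiring S] (hS : IsSemidomain S) :
    NoZeroDivisors S := by
  obtain ⟨W⟩ := hS
  let := W.commRing
  have := W.isDomain
  exact W.inj.noZeroDivisors W.emb (map_zero _) (map_mul _)

namespace HahnSeries

variable {Γ R : Type*} [AddCommMonoid Γ] [PartialOrder Γ] [IsOrderedCancelAddMonoid Γ]
  [NonUnitalNonAssocSemiring R] [NoZeroDivisors R]

theorem support_mul_of_addReduced (hred : AddReduced R) (x y : HahnSeries Γ R) :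
    (x * y).support = x.support + y.support := by
  refine support_mul_subset.antisymm ?_
  rintro _ ⟨a, ha, b, hb, rfl⟩ hab
  rw [coeff_mul] at hab
  have hmem : (a, b) ∈ Finset.antidiagonal x.isPWO_support y.isPWO_support (a + b) :=
    Finset.mem_antidiagonal.2 ⟨ha, hb, rfl⟩
  exact mul_ne_zero ha hb (hred.eq_zero_of_sum_eq_zero hab hmem)

end HahnSeries

lemma isMonomialSeries_of_support_subsingleton {S : Type*} [CommSemiring S] {G : Type*}
    [AddCommGroup G] [LinearOrder G] [IsOrderedAddMonoid G] {p : HahnSeries G S}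
    (hp : p.support.Subsingleton) : IsMonomialSeries p := by
  rcases hp.eq_empty_or_singleton with h | ⟨a, h⟩
  · exact ⟨0, 0, by rw [HahnSeries.single_eq_zero]; exact HahnSeries.support_eq_empty_iff.1 h⟩
  · refine ⟨a, p.coeff a, HahnSeries.ext (funext fun c => ?_)⟩
    by_cases hc : c = a
    · simp [hc]
    · have : c ∉ p.support := by simp [h, hc]
      simpa [HahnSeries.coeff_single_of_ne hc] using this

lemma exists_forall_lt_gap {G : Type*} [Sub G] [Preorder G] {g : ℕ → G} {N : ℕ}
    (hmono : Monotone fun i => g (N + i + 1) - g (N + i))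
    (hunb : ∀ b : G, ∃ i, b < g (N + i + 1) - g (N + i)) (d : G) :
    ∃ M, ∀ m ≥ M, d < g (m + 1) - g m := by
  obtain ⟨i, hi⟩ := hunb d
  refine ⟨N + i, fun m hm => ?_⟩
  obtain ⟨k, rfl⟩ := Nat.exists_eq_add_of_le (le_trans (Nat.le_add_right N i) hm)
  exact hi.trans_le (hmono (by omega))

section Gaps

variable {G : Type*} [AddCommGroup G] [LinearOrder G] [IsOrderedAddMonoid G] {g : ℕ → G}

lemma add_notMem_range_of_lt_gap (hg : StrictMono g) {d : G} (hd : 0 < d) {m : ℕ}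
    (hlt : d < g (m + 1) - g m) : g m + d ∉ Set.range g := by
  rintro ⟨m', hm'⟩
  have hmm' : m < m' := hg.lt_iff_lt.1 (hm' ▸ lt_add_of_pos_right _ hd)
  have : g (m + 1) ≤ g m + d := hm' ▸ hg.monotone hmm'
  exact (lt_sub_iff_add_lt'.1 hlt).not_ge this

lemma finite_setOf_add_mem_range (hg : StrictMono g)
    (hgap : ∀ d : G, ∃ M, ∀ m ≥ M, d < g (m + 1) - g m) {d : G} (hd : 0 < d) :
    {x ∈ Set.range g | x + d ∈ Set.range g}.Finite := by
  obtain ⟨M, hM⟩ := hgap d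
  refine ((Set.finite_Iio M).image g).subset ?_
  rintro _ ⟨⟨m, rfl⟩, hmd⟩
  refine ⟨m, Set.mem_Iio.2 (not_le.1 fun hm => ?_), rfl⟩
  exact add_notMem_range_of_lt_gap hg hd (hM m hm) hmd

lemma finite_of_add_subset_range (hg : StrictMono g)
    (hgap : ∀ d : G, ∃ M, ∀ m ≥ M, d < g (m + 1) - g m) {A B : Set G}
    (hB : ¬ B.Subsingleton) (hAB : A + B ⊆ Set.range g) : A.Finite := by
  obtain ⟨b₀, hb₀, b₁, hb₁, hlt⟩ : ∃ b₀ ∈ B, ∃ b₁ ∈ B, b₀ < b₁ := by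
    obtain ⟨x, hx, y, hy, hxy⟩ := Set.not_subsingleton_iff.1 hB
    rcases hxy.lt_or_gt with h | h
    exacts [⟨x, hx, y, hy, h⟩, ⟨y, hy, x, hx, h⟩]
  refine ((finite_setOf_add_mem_range hg hgap (sub_pos.2 hlt)).preimage
    (add_left_injective b₀).injOn).subset fun a ha => ?_
  refine ⟨hAB (Set.add_mem_add ha hb₀), ?_⟩
  rw [add_add_sub_cancel]
  exact hAB (Set.add_mem_add ha hb₁)

end Gaps

theorem series_monolithic_of_gaps_strictMono_unbounded_general
    {S : Type*} [CommSemiring S] {G : Type*} [AddCommGroup G] [LinearOrder G] [IsOrderedAddMonoid G]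
    (hS : IsSemidomain S) (hred : AddReduced S)
    (g : ℕ → G) (hg : StrictMono g)
    (f : HahnSeries G S)
    (hsupp : f.support = Set.range g)
    (N : ℕ)
    (hmono : StrictMono (fun i : ℕ => g (N + i + 1) - g (N + i)))
    (hunb : ∀ b : G, ∃ i : ℕ, b < g (N + i + 1) - g (N + i)) :
    MonolithicSeries f := by
  have hinf : f.support.Infinite := hsupp ▸ Set.infinite_range_of_injective hg.injective
  refine ⟨fun h => hinf (by simp [h]), ?_⟩
  rintro p q - - rfl
  have := hS.noZeroDivisors
  have hgap := exists_forall_lt_gap hmono.monotone hunb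
  rw [HahnSeries.support_mul_of_addReduced hred] at hsupp hinf
  by_contra! hpq
  have hp : ¬ p.support.Subsingleton := mt isMonomialSeries_of_support_subsingleton hpq.1
  have hq : ¬ q.support.Subsingleton := mt isMonomialSeries_of_support_subsingleton hpq.2
  refine hinf (Set.Finite.add ?_ ?_)
  · exact finite_of_add_subset_range hg hgap hq hsupp.le
  · exact finite_of_add_subset_range hg hgap hp (add_comm p.support _ ▸ hsupp.le)

/-- If the gaps of the exponent sequence of `f ∈ S⟦G⟧` are eventually strictly increasing
and unbounded above, then `f` is monolithic. -/
theorem series_monolithic_of_gaps_strictMono_unbounded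
    {S : Type*} [CommSemiring S] {G : Type*} [AddCommGroup G] [LinearOrder G] [IsOrderedAddMonoid G]
    (hS : IsSemidomain S) (hred : AddReduced S)
    (s : ℕ → S) (g : ℕ → G) (hg : StrictMono g) (hs : ∀ i, s i ≠ 0)
    (f : HahnSeries G S)
    (hcoeff : ∀ i, f.coeff (g i) = s i) (hsupp : f.support = Set.range g)
    (N : ℕ)
    (hmono : StrictMono (fun i : ℕ => g (N + i + 1) - g (N + i)))
    (hunb : ∀ b : G, ∃ i : ℕ, b < g (N + i + 1) - g (N + i)) :
    MonolithicSeries f :=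
  series_monolithic_of_gaps_strictMono_unbounded_general hS hred g hg f hsupp N hmono hunb
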